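/- arXiv:1903.03141 — 3 statements merged into one kernel-verified Lean document; each statement's English description precedes it below -/
import Mathlib

section
/- Let ρ : ℝ → ℂ be supported in [-B/2, B/2] and square-integrable, with Fourier samples ρ̂[n] = ∫_{-B/2}^{B/2} ρ(x) e^{-2πi n x/B} dx. Suppose there exist coefficients α_1, ..., α_P ∈ ℂ such that ρ̂[n] = ∑_{k=1}^{P} α_k ρ̂[n-k] for all n ∈ ℤ (exact linear predictability). Define h̃[0] = -1, h̃[k] = α_k for k = 1,...,P, and h(x) = (1/B) ∑_{n=0}^{P} h̃[n] e^{2πi n x/B}. Then ρ(x) h(x) = 0 for almost every x ∈ [-B/2, B/2]. -/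
open MeasureTheory Finset

/-- Exact linear predictability (extrapolation form) forces ρ·h = 0 almost everywhere
on the field of view. -/
theorem stmt_2 (B : ℝ) (hB : 0 < B) (ρ : ℝ → ℂ)
    (hρ_int : IntegrableOn ρ (Set.Icc (-(B / 2)) (B / 2)))
    (hρ_L2 : IntegrableOn (fun x => ‖ρ x‖ ^ 2) (Set.Icc (-(B / 2)) (B / 2)))
    (hρ_supp : ∀ x : ℝ, x ∉ Set.Icc (-(B / 2)) (B / 2) → ρ x = 0)
    (P : ℕ) (α : ℤ → ℂ)
    (ρhat : ℤ → ℂ)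
    (hρhat : ∀ n : ℤ, ρhat n =
      ∫ x in (-(B / 2))..(B / 2),
        ρ x * Complex.exp (-(2 * Real.pi * Complex.I * (n : ℂ) * (x : ℂ) / (B : ℂ))))
    (hpred : ∀ n : ℤ, ρhat n = ∑ k ∈ Finset.Icc (1 : ℤ) (P : ℤ), α k * ρhat (n - k))
    (ht : ℤ → ℂ) (ht0 : ht 0 = -1)
    (htα : ∀ k ∈ Finset.Icc (1 : ℤ) (P : ℤ), ht k = α k)
    (h : ℝ → ℂ)
    (hh : ∀ x : ℝ, h x = (1 / (B : ℂ)) *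
      ∑ n ∈ Finset.Icc (0 : ℤ) (P : ℤ),
        ht n * Complex.exp (2 * Real.pi * Complex.I * (n : ℂ) * (x : ℂ) / (B : ℂ))) :
    ∀ᵐ x ∂(volume.restrict (Set.Icc (-(B / 2)) (B / 2))), ρ x * h x = 0 := by
  haveI : Fact (0 < B) := ⟨hB⟩
  set a : ℝ := -(B / 2) with ha
  have hab : a + B = B / 2 := by rw [ha]; ring
  have haltb : a < B / 2 := by rw [ha]; linarith
  have hale : a ≤ a + B := by linarith
  -- measurable representative of ρ
  set asm := hρ_int.aestronglyMeasurable with hasm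
  set ρ' : ℝ → ℂ := asm.mk ρ with hρ'def
  have hρ'sm : StronglyMeasurable ρ' := asm.stronglyMeasurable_mk
  have hρeq : ρ =ᵐ[volume.restrict (Set.Icc a (B / 2))] ρ' := asm.ae_eq_mk
  have haemem : ∀ᵐ x ∂(volume : Measure ℝ), x ∈ Set.Icc a (B / 2) → ρ x = ρ' x :=
    (ae_restrict_iff' measurableSet_Icc).mp hρeq
  -- the exponential kernel
  set e : ℤ → ℝ → ℂ := fun (k : ℤ) (x : ℝ) =>
    Complex.exp (-(2 * Real.pi * Complex.I * (k : ℂ) * (x : ℂ) / (B : ℂ))) with he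
  have hnorm_e : ∀ (k : ℤ) (x : ℝ), ‖e k x‖ = 1 := by
    intro k x
    have h2 : (-(2 * Real.pi * Complex.I * (k : ℂ) * (x : ℂ) / (B : ℂ)))
        = ((-(2 * Real.pi * k * x / B) : ℝ) : ℂ) * Complex.I := by push_cast; ring
    rw [he]
    simp only [h2, Complex.norm_exp_ofReal_mul_I]
  have hnorm_e2 : ∀ (k : ℤ) (x : ℝ),
      ‖Complex.exp (2 * Real.pi * Complex.I * (k : ℂ) * (x : ℂ) / (B : ℂ))‖ = 1 := by
    intro k x
    have h2 : (2 * Real.pi * Complex.I * (k : ℂ) * (x : ℂ) / (B : ℂ))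
        = (((2 * Real.pi * k * x / B) : ℝ) : ℂ) * Complex.I := by push_cast; ring
    rw [h2, Complex.norm_exp_ofReal_mul_I]
  -- continuity and boundedness of h
  have hcont : Continuous h := by
    have h2 : h = fun x : ℝ => (1 / (B : ℂ)) *
      ∑ n ∈ Finset.Icc (0 : ℤ) (P : ℤ),
        ht n * Complex.exp (2 * Real.pi * Complex.I * (n : ℂ) * (x : ℂ) / (B : ℂ)) :=
      funext hh
    rw [h2]
    refine continuous_const.mul (continuous_finset_sum _ fun i _ => continuous_const.mul ?_)
    exact Complex.continuous_exp.comp (by fun_prop)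
  set C : ℝ := (1 / B) * ∑ n ∈ Finset.Icc (0 : ℤ) (P : ℤ), ‖ht n‖ with hC
  have hbound : ∀ x : ℝ, ‖h x‖ ≤ C := by
    intro x
    rw [hh x, norm_mul, hC]
    have h1 : ‖(1 / (B : ℂ))‖ = 1 / B := by simp [abs_of_pos hB]
    rw [h1]
    refine mul_le_mul_of_nonneg_left ?_ (by positivity)
    refine (norm_sum_le _ _).trans (Finset.sum_le_sum fun m _ => ?_)
    rw [norm_mul, hnorm_e2, mul_one]
  -- integrability facts
  have hρ'intIcc : IntegrableOn ρ' (Set.Icc a (B / 2)) := hρ_int.congr hρeq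
  have hρ'int : IntegrableOn ρ' (Set.Ioc a (B / 2)) :=
    hρ'intIcc.mono_set Set.Ioc_subset_Icc_self
  have hInt : ∀ k : ℤ, IntegrableOn (fun x => ρ' x * e k x) (Set.Ioc a (B / 2)) := by
    intro k
    have h1 : IntegrableOn (fun x => e k x * ρ' x) (Set.Ioc a (B / 2)) :=
      hρ'int.bdd_mul ((Complex.continuous_exp.comp (by fun_prop)).aestronglyMeasurable)
        (Filter.Eventually.of_forall fun x => le_of_eq (hnorm_e k x))
    exact h1.congr_fun (fun x _ => mul_comm _ _) measurableSet_Ioc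
  have hρhat' : ∀ k : ℤ, ρhat k = ∫ x in a..(B / 2), ρ' x * e k x := by
    intro k
    rw [hρhat k]
    refine intervalIntegral.integral_congr_ae ?_
    filter_upwards [haemem] with x hx hx2
    rw [Set.uIoc_of_le haltb.le] at hx2
    rw [hx (Set.Ioc_subset_Icc_self hx2), he]
  -- exponent algebra
  have hexp : ∀ (n m : ℤ) (x : ℝ),
      Complex.exp (2 * Real.pi * Complex.I * ((-n : ℤ) : ℂ) * (x : ℂ) / (B : ℂ)) *
        Complex.exp (2 * Real.pi * Complex.I * (m : ℂ) * (x : ℂ) / (B : ℂ))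
      = e (n - m) x := by
    intro n m x
    rw [he, ← Complex.exp_add]
    congr 1
    push_cast
    ring
  -- pointwise identity for the Fourier integrand
  have hkey : ∀ (n : ℤ) (x : ℝ),
      (fourier (-n) (x : AddCircle B)) • (ρ' x * h x)
      = ∑ m ∈ Finset.Icc (0 : ℤ) (P : ℤ),
          ht m * ((1 / (B : ℂ)) * (ρ' x * e (n - m) x)) := by
    intro n x
    rw [smul_eq_mul, fourier_coe_apply, hh x]
    simp only [Finset.mul_sum]
    refine Finset.sum_congr rfl fun m _ => ?_
    have h2 := hexp n m x
    push_cast at h2 ⊢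
    linear_combination (ρ' x * (1 / (B : ℂ)) * ht m) * h2
  set g : ℝ → ℂ := fun x => ρ' x * h x with hg
  -- the lift to the circle
  have hgsm : StronglyMeasurable g := hρ'sm.mul hcont.stronglyMeasurable
  have hgmem : MemLp g 2 (volume.restrict (Set.Ioc a (a + B))) := by
    have hρ'L2 : MemLp ρ' 2 (volume.restrict (Set.Icc a (B / 2))) := by
      rw [memLp_two_iff_integrable_sq_norm hρ'sm.aestronglyMeasurable]
      exact hρ_L2.congr (hρeq.mono fun x hx => by simp [hx])
    have hρ'L2' : MemLp ρ' 2 (volume.restrict (Set.Ioc a (a + B))) := by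
      refine hρ'L2.mono_measure (Measure.restrict_mono ?_ le_rfl)
      rw [hab]; exact Set.Ioc_subset_Icc_self
    refine MemLp.of_le_mul (c := C) hρ'L2'
      (hgsm.aestronglyMeasurable) (Filter.Eventually.of_forall fun x => ?_)
    rw [hg]
    calc ‖ρ' x * h x‖ = ‖ρ' x‖ * ‖h x‖ := norm_mul _ _
      _ ≤ ‖ρ' x‖ * C := mul_le_mul_of_nonneg_left (hbound x) (norm_nonneg _)
      _ = C * ‖ρ' x‖ := mul_comm _ _
  set F : AddCircle B → ℂ := AddCircle.liftIoc B a g with hF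
  have hFsm : StronglyMeasurable F := by
    have h2 : F = g ∘ (fun z => ((AddCircle.measurableEquivIoc B a z : Set.Ioc a (a + B)) : ℝ)) :=
      rfl
    rw [h2]
    exact hgsm.comp_measurable
      (measurable_subtype_coe.comp (AddCircle.measurableEquivIoc B a).measurable)
  have hFcoe : ∀ᵐ (x : ℝ) ∂(volume.restrict (Set.Ioc a (a + B))),
      F ((x : ℝ) : AddCircle B) = g x := by
    filter_upwards [ae_restrict_mem measurableSet_Ioc] with x hx
    exact AddCircle.liftIoc_coe_apply hx
  have hmk : Measurable ((↑) : ℝ → AddCircle B) := (AddCircle.measurePreserving_mk B a).measurable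
  have hFv : MemLp F 2 (volume : Measure (AddCircle B)) := by
    rw [← (AddCircle.measurePreserving_mk B a).map_eq]
    refine (memLp_map_measure_iff ?_ hmk.aemeasurable).mpr ?_
    · exact hFsm.aestronglyMeasurable
    · have hcoe2 : g =ᵐ[volume.restrict (Set.Ioc a (a + B))] (F ∘ ((↑) : ℝ → AddCircle B)) :=
        hFcoe.mono fun x hx => hx.symm
      exact hgmem.ae_eq hcoe2
  have hsmul : ((ENNReal.ofReal B)⁻¹ : ENNReal) • (volume : Measure (AddCircle B))
      = @AddCircle.haarAddCircle B ⟨hB⟩ := by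
    rw [AddCircle.volume_eq_smul_haarAddCircle, smul_smul,
      ENNReal.inv_mul_cancel (ENNReal.ofReal_pos.mpr hB).ne' ENNReal.ofReal_ne_top, one_smul]
  have hFmem : MemLp F 2 (@AddCircle.haarAddCircle B ⟨hB⟩) := by
    rw [← hsmul]
    exact hFv.smul_measure (by simp [hB])
  -- Fourier coefficients of F all vanish
  have hcoeff : ∀ n : ℤ, fourierCoeff F n = 0 := by
    intro n
    rw [fourierCoeff_eq_intervalIntegral F n a]
    have hcongr : (∫ x in a..(a + B), (fourier (-n) (x : AddCircle B)) • F ↑x)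
        = ∫ x in a..(a + B), (fourier (-n) (x : AddCircle B)) • g x := by
      refine intervalIntegral.integral_congr_ae ?_
      refine Filter.Eventually.of_forall fun x hx => ?_
      rw [Set.uIoc_of_le hale] at hx
      congr 1
      exact AddCircle.liftIoc_coe_apply hx
    rw [hcongr]
    have hkey' : (∫ x in a..(a + B), (fourier (-n) (x : AddCircle B)) • g x)
        = ∫ x in a..(a + B), ∑ m ∈ Finset.Icc (0 : ℤ) (P : ℤ),
            ht m * ((1 / (B : ℂ)) * (ρ' x * e (n - m) x)) := by
      refine intervalIntegral.integral_congr fun x _ => ?_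
      exact hkey n x
    rw [hkey']
    have hii : ∀ m : ℤ, IntervalIntegrable
        (fun x => ht m * ((1 / (B : ℂ)) * (ρ' x * e (n - m) x))) volume a (a + B) := by
      intro m
      rw [intervalIntegrable_iff, Set.uIoc_of_le hale, hab]
      exact (((hInt (n - m)).const_mul _).const_mul _)
    rw [intervalIntegral.integral_finset_sum fun m _ => hii m]
    have hterm : ∀ m : ℤ, (∫ x in a..(a + B), ht m * ((1 / (B : ℂ)) * (ρ' x * e (n - m) x)))
        = ht m * ((1 / (B : ℂ)) * ρhat (n - m)) := by
      intro m
      rw [intervalIntegral.integral_const_mul, intervalIntegral.integral_const_mul]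
      rw [hρhat' (n - m), hab]
    simp only [hterm]
    have hsplit : Finset.Icc (0 : ℤ) (P : ℤ) = insert 0 (Finset.Icc (1 : ℤ) (P : ℤ)) := by
      ext k; simp only [Finset.mem_Icc, Finset.mem_insert]; omega
    have hzero : ∑ m ∈ Finset.Icc (0 : ℤ) (P : ℤ), ht m * ((1 / (B : ℂ)) * ρhat (n - m))
        = 0 := by
      rw [hsplit, Finset.sum_insert (by simp)]
      have hrest : ∑ k ∈ Finset.Icc (1 : ℤ) (P : ℤ), ht k * ((1 / (B : ℂ)) * ρhat (n - k))
          = (1 / (B : ℂ)) * ∑ k ∈ Finset.Icc (1 : ℤ) (P : ℤ), α k * ρhat (n - k) := by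
        rw [Finset.mul_sum]
        refine Finset.sum_congr rfl fun k hk => ?_
        rw [htα k hk]; ring
      rw [hrest, ← hpred n, ht0, sub_zero]
      ring
    rw [hzero, smul_zero]
  -- conclude F = 0 a.e.
  set fL : Lp ℂ 2 (@AddCircle.haarAddCircle B ⟨hB⟩) := hFmem.toLp F with hfL
  have hcoeffL : ∀ n : ℤ, fourierCoeff (fL : AddCircle B → ℂ) n = 0 := by
    intro n
    have h2 : fourierCoeff (fL : AddCircle B → ℂ) n = fourierCoeff F n := by
      unfold fourierCoeff
      refine integral_congr_ae ?_
      filter_upwards [hFmem.coeFn_toLp] with z hz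
      rw [← hfL] at hz
      rw [hz]
    rw [h2, hcoeff n]
  have hfL0 : fL = 0 := by
    have h2 : (fourierBasis (T := B)).repr fL = 0 := by
      ext n
      rw [fourierBasis_repr]
      simpa using hcoeffL n
    exact (fourierBasis (T := B)).repr.map_eq_zero_iff.mp h2
  have hF0 : ∀ᵐ z ∂(@AddCircle.haarAddCircle B ⟨hB⟩), F z = 0 := by
    have h2 := hFmem.coeFn_toLp
    rw [← hfL] at h2
    filter_upwards [h2.symm, Lp.coeFn_zero ℂ 2 (@AddCircle.haarAddCircle B ⟨hB⟩)] with z h3 h4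
    rw [h3, hfL0] at *
    exact h4
  have hF0v : ∀ᵐ z ∂(volume : Measure (AddCircle B)), F z = 0 := by
    rw [AddCircle.volume_eq_smul_haarAddCircle]
    exact Measure.ae_smul_measure hF0 _
  have hg0 : ∀ᵐ (x : ℝ) ∂(volume.restrict (Set.Ioc a (a + B))), F ((x : ℝ) : AddCircle B) = 0 := by
    rw [← (AddCircle.measurePreserving_mk B a).map_eq] at hF0v
    exact ae_of_ae_map hmk.aemeasurable hF0v
  -- pull back to the interval
  have hres : volume.restrict (Set.Icc a (B / 2)) = volume.restrict (Set.Ioc a (B / 2)) :=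
    (Measure.restrict_congr_set Ioc_ae_eq_Icc).symm
  rw [hres]
  rw [hab] at hg0
  have haemem' : ∀ᵐ x ∂(volume.restrict (Set.Ioc a (B / 2))), ρ x = ρ' x := by
    refine (ae_restrict_iff' measurableSet_Ioc).mpr ?_
    filter_upwards [haemem] with x hx hx2
    exact hx (Set.Ioc_subset_Icc_self hx2)
  filter_upwards [hg0, ae_restrict_mem measurableSet_Ioc, haemem'] with x h1 h2 h3
  have h4 : F ((x : ℝ) : AddCircle B) = g x := by
    refine AddCircle.liftIoc_coe_apply ?_
    rw [hab]; exact h2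
  rw [h3]
  have h5 : g x = ρ' x * h x := rfl
  rw [← h5, ← h4, h1]
end

section
/- Let ρ : ℝ → ℂ be square-integrable, supported in [-B/2, B/2], and assume ρ(x) ≠ 0 for almost every x ∈ [-B/2, B/2]. If h̃ : {-L,...,P} → ℂ is a filter such that ∑_{k=-L}^{P} h̃[k] ρ̂[n-k] = 0 for all n ∈ ℤ, where ρ̂[n] = ∫_{-B/2}^{B/2} ρ(x) e^{-2πi n x/B} dx, then h̃[k] = 0 for all k. -/
open MeasureTheory Finset

open scoped Real

section Helpers

variable {T : ℝ} [hT : Fact (0 < T)]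

lemma my_integral_fourier_haar (m : ℤ) :
    (∫ t : AddCircle T, fourier m t ∂AddCircle.haarAddCircle)
      = if m = 0 then 1 else 0 := by
  split_ifs with hm
  · subst hm
    have : (fun t : AddCircle T => (fourier 0 t : ℂ)) = fun _ => (1 : ℂ) :=
      funext fun t => fourier_zero
    rw [this, integral_const]
    simp
  · exact integral_eq_zero_of_add_right_eq_neg (μ := AddCircle.haarAddCircle)
      (fourier_add_half_inv_index hm hT.out)

lemma my_fourierCoeff_congr {f g : AddCircle T → ℂ}
    (h : f =ᵐ[AddCircle.haarAddCircle] g) (n : ℤ) :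
    fourierCoeff f n = fourierCoeff g n := by
  simp only [fourierCoeff]
  exact integral_congr_ae (h.mono fun x hx => by dsimp only; rw [hx])

lemma my_continuous_integrable {f : AddCircle T → ℂ} (hf : Continuous f) :
    Integrable f (AddCircle.haarAddCircle) :=
  hf.integrable_of_hasCompactSupport (isClosed_tsupport _).isCompact

end Helpers

/-- If the image is nonzero almost everywhere on the FOV, no nontrivial exact
annihilating filter exists. -/
theorem stmt_4 (B : ℝ) (hB : 0 < B) (ρ : ℝ → ℂ)
    (hρ_int : IntegrableOn ρ (Set.Icc (-(B / 2)) (B / 2)))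
    (hρ_L2 : IntegrableOn (fun x => ‖ρ x‖ ^ 2) (Set.Icc (-(B / 2)) (B / 2)))
    (hρ_supp : ∀ x : ℝ, x ∉ Set.Icc (-(B / 2)) (B / 2) → ρ x = 0)
    (hρ_ne : ∀ᵐ x ∂(volume.restrict (Set.Icc (-(B / 2)) (B / 2))), ρ x ≠ 0)
    (L P : ℕ) (ht : ℤ → ℂ)
    (htsupp : ∀ k : ℤ, k ∉ Finset.Icc (-(L : ℤ)) (P : ℤ) → ht k = 0)
    (ρhat : ℤ → ℂ)
    (hρhat : ∀ n : ℤ, ρhat n =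
      ∫ x in (-(B / 2))..(B / 2),
        ρ x * Complex.exp (-(2 * Real.pi * Complex.I * (n : ℂ) * (x : ℂ) / (B : ℂ))))
    (hannihil : ∀ n : ℤ, ∑ k ∈ Finset.Icc (-(L : ℤ)) (P : ℤ), ht k * ρhat (n - k) = 0) :
    ∀ k : ℤ, ht k = 0 := by
  haveI : Fact (0 < B) := ⟨hB⟩
  set a : ℝ := -(B / 2) with ha
  have hab : a + B = B / 2 := by rw [ha]; ring
  set s : Finset ℤ := Finset.Icc (-(L : ℤ)) (P : ℤ) with hs
  -- measurable representative of ρ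
  have hρ_asm : AEStronglyMeasurable ρ (volume.restrict (Set.Icc a (B / 2))) := hρ_int.1
  set ρ' : ℝ → ℂ := hρ_asm.mk ρ with hρ'
  have hρ'_sm : StronglyMeasurable ρ' := hρ_asm.stronglyMeasurable_mk
  have hsub : Set.Ioc a (a + B) ⊆ Set.Icc a (B / 2) := by
    rw [hab]; exact Set.Ioc_subset_Icc_self
  have hae : ρ =ᵐ[volume.restrict (Set.Ioc a (a + B))] ρ' :=
    ae_restrict_of_ae_restrict_of_subset hsub hρ_asm.ae_eq_mk
  -- the trigonometric polynomial
  set hcm : C(AddCircle B, ℂ) := ∑ k ∈ s, ht k • fourier k with hhcm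
  have hcm_apply : ∀ t : AddCircle B, hcm t = ∑ k ∈ s, ht k * fourier k t := by
    intro t
    simp [hhcm]
  -- the product function on the circle
  set Fc : AddCircle B → ℂ := fun t => AddCircle.liftIoc B a ρ' t * hcm t with hFc
  have hlift_meas : Measurable (AddCircle.liftIoc B a ρ') :=
    (hρ'_sm.measurable.comp measurable_subtype_coe).comp
      (AddCircle.measurableEquivIoc B a).measurable
  have hFc_meas : Measurable Fc := hlift_meas.mul hcm.continuous.measurable
  -- ρ' is integrable on Ioc a (a+B)
  have hρ'_int : IntegrableOn ρ' (Set.Ioc a (a + B)) :=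
    (hρ_int.mono_set hsub).congr hae
  -- Step 1: all Fourier coefficients of Fc vanish
  have hle : a ≤ a + B := by linarith
  have hcoeff : ∀ n : ℤ, fourierCoeff Fc n = 0 := by
    intro n
    rw [fourierCoeff_eq_intervalIntegral Fc n a, intervalIntegral.integral_of_le hle]
    have hpt : ∀ x ∈ Set.Ioc a (a + B),
        fourier (-n) (x : AddCircle B) • Fc (x : AddCircle B)
          = ∑ k ∈ s, ht k * (fourier (k + -n) ((x : ℝ) : AddCircle B) * ρ' x) := by
      intro x hx
      rw [hFc]
      simp only [smul_eq_mul]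
      rw [AddCircle.liftIoc_coe_apply hx, hcm_apply, Finset.mul_sum, Finset.mul_sum]
      refine Finset.sum_congr rfl fun k _ => ?_
      rw [fourier_add]
      ring
    rw [setIntegral_congr_fun measurableSet_Ioc hpt]
    have hint : ∀ k ∈ s, Integrable
        (fun x : ℝ => ht k * (fourier (k + -n) ((x : ℝ) : AddCircle B) * ρ' x))
        (volume.restrict (Set.Ioc a (a + B))) := by
      intro k _
      refine Integrable.const_mul ?_ (ht k)
      refine hρ'_int.bdd_mul (c := 1) ?_ (Filter.Eventually.of_forall fun x => ?_)
      · exact (Continuous.comp (map_continuous _)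
          (AddCircle.continuous_mk' B)).aestronglyMeasurable
      · refine le_of_eq ?_
        rw [fourier_apply, Circle.norm_coe]
    rw [integral_finset_sum s hint]
    have hterm : ∀ k ∈ s,
        (∫ x in Set.Ioc a (a + B),
          ht k * (fourier (k + -n) ((x : ℝ) : AddCircle B) * ρ' x))
          = ht k * ρhat (n - k) := by
      intro k _
      rw [integral_const_mul]
      congr 1
      rw [hρhat (n - k), ← hab, intervalIntegral.integral_of_le hle]
      refine integral_congr_ae ?_
      filter_upwards [hae] with x hx
      rw [← hx, fourier_coe_apply]
      push_cast
      rw [mul_comm]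
      congr 1
      field_simp
      ring
    rw [Finset.sum_congr rfl hterm, hannihil n, smul_zero]
  -- Step 2: Fc is in L²
  have hmp := AddCircle.measurePreserving_mk B a
  have hρ'2 : MemLp ρ' 2 (volume.restrict (Set.Ioc a (a + B))) := by
    refine (memLp_two_iff_integrable_sq_norm hρ'_sm.aestronglyMeasurable).mpr ?_
    refine ((hρ_L2.mono_set hsub).congr ?_ : _)
    filter_upwards [hae] with x hx
    rw [hx]
  have hGmem : MemLp (fun x : ℝ => ρ' x * hcm ((x : ℝ) : AddCircle B)) 2
      (volume.restrict (Set.Ioc a (a + B))) := by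
    refine MemLp.of_le_mul (c := ‖hcm‖) hρ'2
      (hρ'_sm.aestronglyMeasurable.mul
        ((hcm.continuous.comp (AddCircle.continuous_mk' B)).aestronglyMeasurable)) ?_
    refine Filter.Eventually.of_forall fun x => ?_
    rw [norm_mul, mul_comm]
    exact mul_le_mul_of_nonneg_right (hcm.norm_coe_le_norm _) (norm_nonneg _)
  have hFc_mem_vol : MemLp Fc 2 (volume : Measure (AddCircle B)) := by
    rw [← hmp.map_eq]
    refine (memLp_map_measure_iff hFc_meas.stronglyMeasurable.aestronglyMeasurable
      (AddCircle.measurable_mk' (a := B)).aemeasurable).mpr ?_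
    refine hGmem.ae_eq ?_
    filter_upwards [ae_restrict_mem measurableSet_Ioc] with x hx
    show ρ' x * hcm _ = AddCircle.liftIoc B a ρ' _ * hcm _
    rw [AddCircle.liftIoc_coe_apply hx]
  have hBne : (ENNReal.ofReal B) ≠ 0 := by
    simp [hB]
  have hFc_mem : MemLp Fc 2 (AddCircle.haarAddCircle (T := B)) := by
    have h1 := hFc_mem_vol.smul_measure (c := (ENNReal.ofReal B)⁻¹)
      (by simp [hBne])
    rwa [AddCircle.volume_eq_smul_haarAddCircle, ← smul_assoc, smul_eq_mul,
      ENNReal.inv_mul_cancel hBne ENNReal.ofReal_ne_top, one_smul] at h1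
  -- Step 3: Fc = 0 a.e.
  have hFLp0 : hFc_mem.toLp Fc = 0 := by
    apply fourierBasis.repr.injective
    rw [map_zero]
    refine lp.ext (funext fun n => ?_)
    rw [fourierBasis_repr]
    have := my_fourierCoeff_congr (hFc_mem.coeFn_toLp) n
    rw [this, hcoeff n]
    rfl
  have hFc0 : Fc =ᵐ[AddCircle.haarAddCircle (T := B)] 0 := by
    have h0 : hFc_mem.toLp Fc = (MemLp.zero : MemLp (0 : AddCircle B → ℂ) 2
        (AddCircle.haarAddCircle)).toLp 0 := by
      rw [hFLp0, MemLp.toLp_zero]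
    exact (MemLp.toLp_eq_toLp_iff hFc_mem MemLp.zero).mp h0
  -- Step 4: liftIoc ρ' ≠ 0 a.e.
  have hρ'ne : ∀ᵐ x ∂volume.restrict (Set.Ioc a (a + B)), ρ' x ≠ 0 := by
    have h1 : ∀ᵐ x ∂volume.restrict (Set.Ioc a (a + B)), ρ x ≠ 0 :=
      ae_restrict_of_ae_restrict_of_subset hsub hρ_ne
    filter_upwards [h1, hae] with x hx1 hx2
    rw [← hx2]; exact hx1
  have hνne : ∀ᵐ t ∂(volume : Measure (AddCircle B)),
      AddCircle.liftIoc B a ρ' t ≠ 0 := by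
    rw [← hmp.map_eq]
    refine (ae_map_iff (AddCircle.measurable_mk' (a := B)).aemeasurable
      ((hlift_meas (measurableSet_singleton (0 : ℂ))).compl)).mpr ?_
    filter_upwards [hρ'ne, ae_restrict_mem measurableSet_Ioc] with x hx hmem
    show ¬ AddCircle.liftIoc B a ρ' _ ∈ ({0} : Set ℂ)
    rw [Set.mem_singleton_iff, AddCircle.liftIoc_coe_apply hmem]
    exact hx
  have hνne_haar : ∀ᵐ t ∂(AddCircle.haarAddCircle (T := B)),
      AddCircle.liftIoc B a ρ' t ≠ 0 := by
    rw [AddCircle.volume_eq_smul_haarAddCircle] at hνne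
    exact (Measure.ae_ennreal_smul_measure_iff hBne).mp hνne
  -- Step 5: hcm = 0 a.e.
  have hhzero : ⇑hcm =ᵐ[AddCircle.haarAddCircle (T := B)] 0 := by
    filter_upwards [hFc0, hνne_haar] with t ht0 htne
    have : AddCircle.liftIoc B a ρ' t * hcm t = 0 := ht0
    rcases mul_eq_zero.mp this with h | h
    · exact absurd h htne
    · exact h
  -- Step 6: coefficients vanish
  intro j
  by_cases hj : j ∈ s
  · have h1 : fourierCoeff (⇑hcm) j = 0 := by
      simp only [fourierCoeff]
      apply integral_eq_zero_of_ae
      filter_upwards [hhzero] with t htz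
      rw [htz]
      simp
    have h2 : fourierCoeff (⇑hcm) j = ht j := by
      simp only [fourierCoeff]
      have hpt : (fun t : AddCircle B => fourier (-j) t • hcm t)
          = fun t => ∑ k ∈ s, ht k * fourier (k + -j) t := by
        funext t
        rw [smul_eq_mul, hcm_apply, Finset.mul_sum]
        refine Finset.sum_congr rfl fun k _ => ?_
        rw [fourier_add]
        ring
      rw [hpt, integral_finset_sum]
      · have : ∀ k ∈ s, (∫ t : AddCircle B, ht k * fourier (k + -j) t
            ∂AddCircle.haarAddCircle)
            = if k = j then ht k else 0 := by
          intro k _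
          rw [integral_const_mul, my_integral_fourier_haar]
          by_cases hkj : k = j
          · simp [hkj]
          · have : k + -j ≠ 0 := fun hcon => hkj (by omega)
            simp [this, hkj]
        rw [Finset.sum_congr rfl this, Finset.sum_ite_eq' s j ht, if_pos hj]
      · intro k _
        exact (my_continuous_integrable
          ((map_continuous (fourier (k + -j))))).const_mul (ht k)
    rw [h2] at h1
    exact h1
  · exact htsupp j hj
end

section
/- Let ρ : ℝ → ℂ be square-integrable and supported in [-B/2, B/2], and suppose there exists a measurable set E ⊆ [-B/2, B/2] of positive Lebesgue measure which contains an open interval and such that ρ(x) = 0 for a.e. x ∈ E. Then for every δ > 0 there exist L, P ∈ ℕ and a filter h̃ supported on {-L,...,P} with h̃[0] = -1 such that (1/B) ∫_{-B/2}^{B/2} |ρ(x) h(x)|² dx ≤ δ · ‖ρ‖²_{L²}, where h(x) = (1/B) ∑_{n=-L}^{P} h̃[n] e^{2πi n x/B}. -/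
open MeasureTheory Finset

section helpers
open AddCircle
open scoped Real

variable {T : ℝ} [hT : Fact (0 < T)]

lemma my_integrable (f : C(AddCircle T, ℂ)) : Integrable f haarAddCircle :=
  f.continuous.integrable_of_hasCompactSupport (isClosed_tsupport _).isCompact

lemma my_fourierCoeff_zero (f : AddCircle T → ℂ) :
    fourierCoeff f 0 = ∫ t, f t ∂haarAddCircle := by
  simp [fourierCoeff, fourier_zero]

lemma my_integral_fourier (m : ℤ) :
    (∫ t, fourier m t ∂(haarAddCircle : Measure (AddCircle T))) =
      if m = 0 then 1 else 0 := by
  split_ifs with h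
  · subst h
    simp only [fourier_zero]
    simp
  · exact integral_eq_zero_of_add_right_eq_neg (fourier_add_half_inv_index h hT.out)

lemma my_norm_fourierCoeff_le (f : C(AddCircle T, ℂ)) :
    ‖fourierCoeff (⇑f) 0‖ ≤ ‖f‖ := by
  rw [my_fourierCoeff_zero]
  have h := norm_integral_le_of_norm_le_const
    (μ := (haarAddCircle : Measure (AddCircle T))) (C := ‖f‖)
    (Filter.Eventually.of_forall fun t => f.norm_coe_le_norm t)
  simpa using h

lemma my_fourierCoeff_sub (f g : C(AddCircle T, ℂ)) :
    fourierCoeff (⇑f - ⇑g) 0 = fourierCoeff (⇑f) 0 - fourierCoeff (⇑g) 0 := by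
  simp only [my_fourierCoeff_zero]
  exact integral_sub (my_integrable f) (my_integrable g)

end helpers

/-- If the image vanishes on a set containing an open interval inside the FOV, then for
every δ > 0 there is a finite filter with 0th tap -1 whose associated trigonometric
polynomial makes the product ρ·h small in L². -/
theorem stmt_18 (B : ℝ) (hB : 0 < B) (ρ : ℝ → ℂ)
    (hρ_L2 : IntegrableOn (fun x => ‖ρ x‖ ^ 2) (Set.Icc (-(B / 2)) (B / 2)))
    (hρ_supp : ∀ x : ℝ, x ∉ Set.Icc (-(B / 2)) (B / 2) → ρ x = 0)
    (hρ_ne : ¬ (∀ᵐ x ∂(volume : Measure ℝ), ρ x = 0))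
    (E : Set ℝ) (hE_sub : E ⊆ Set.Icc (-(B / 2)) (B / 2)) (hE_meas : MeasurableSet E)
    (hE_pos : 0 < volume E)
    (hE_zero : ∀ᵐ x ∂(volume.restrict E), ρ x = 0)
    (a b : ℝ) (hab : a < b) (hI : Set.Ioo a b ⊆ E) :
    ∀ δ : ℝ, 0 < δ →
      ∃ (L P : ℕ) (ht : ℤ → ℂ),
        (∀ k : ℤ, k ∉ Finset.Icc (-(L : ℤ)) (P : ℤ) → ht k = 0) ∧ ht 0 = -1 ∧
        (1 / B) *
            (∫ x in (-(B / 2))..(B / 2),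
              ‖ρ x * ((1 / (B : ℂ)) *
                ∑ n ∈ Finset.Icc (-(L : ℤ)) (P : ℤ),
                  ht n * Complex.exp (2 * Real.pi * Complex.I * (n : ℂ) * (x : ℂ) / (B : ℂ)))‖ ^ 2)
          ≤ δ * ∫ x in (-(B / 2))..(B / 2), ‖ρ x‖ ^ 2 := by
  classical
  intro δ hδ
  haveI : Fact (0 < B) := ⟨hB⟩
  -- the interval (a,b) sits inside the field of view
  have haB : -(B / 2) ≤ a := by
    by_contra h
    push_neg at h
    have h1 : a < min b (-(B / 2)) := lt_min hab h
    set t := (a + min b (-(B / 2))) / 2 with ht_def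
    have ht1 : a < t := by rw [ht_def]; linarith
    have ht2 : t < min b (-(B / 2)) := by rw [ht_def]; linarith
    have hm1 := (hE_sub (hI ⟨ht1, lt_of_lt_of_le ht2 (min_le_left _ _)⟩)).1
    have hm2 := lt_of_lt_of_le ht2 (min_le_right _ _)
    linarith
  have hbB : b ≤ B / 2 := by
    by_contra h
    push_neg at h
    have h1 : max a (B / 2) < b := max_lt hab h
    set t := (max a (B / 2) + b) / 2 with ht_def
    have ht1 : t < b := by rw [ht_def]; linarith
    have ht2 : max a (B / 2) < t := by rw [ht_def]; linarith
    have hm1 := (hE_sub (hI ⟨lt_of_le_of_lt (le_max_left _ _) ht2, ht1⟩)).2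
    have hm2 := lt_of_le_of_lt (le_max_right _ _) ht2
    linarith
  -- bump function supported in (a, b)
  set q : ℝ → ℝ := fun x => max 0 ((x - a) * (b - x)) with hq_def
  have hq_cont : Continuous q := continuous_const.max (by continuity)
  have hq_zero : ∀ x : ℝ, x ∉ Set.Ioo a b → q x = 0 := by
    intro x hx
    rw [Set.mem_Ioo, not_and_or, not_lt, not_lt] at hx
    rcases hx with h | h
    · exact max_eq_left (by nlinarith)
    · exact max_eq_left (by nlinarith)
  set c := ∫ x in a..b, q x with hc_def
  have hc_pos : 0 < c := by
    refine intervalIntegral.intervalIntegral_pos_of_pos_on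
      (hq_cont.intervalIntegrable a b) (fun x hx => ?_) hab
    exact lt_max_of_lt_right (by nlinarith [hx.1, hx.2])
  -- the normalized continuous profile
  set g : ℝ → ℂ := fun x => (-(B : ℂ) / (c : ℝ)) * ((q x : ℝ) : ℂ) with hg_def
  have hg_cont : Continuous g := continuous_const.mul (Complex.continuous_ofReal.comp hq_cont)
  have hg_zero : ∀ x : ℝ, x ∉ Set.Ioo a b → g x = 0 := by
    intro x hx
    rw [hg_def]
    simp [hq_zero x hx]
  have hnm1 : (-(B / 2) : ℝ) ∉ Set.Ioo a b := fun h => absurd h.1 (not_lt.mpr haB)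
  have hnm2 : (-(B / 2) + B : ℝ) ∉ Set.Ioo a b := fun h => absurd h.2 (by push_neg; linarith)
  have hper : g (-(B / 2)) = g (-(B / 2) + B) := by
    rw [hg_zero _ hnm1, hg_zero _ hnm2]
  set G : C(AddCircle B, ℂ) :=
    ⟨AddCircle.liftIco B (-(B / 2)) g,
      AddCircle.liftIco_continuous hper hg_cont.continuousOn⟩ with hG_def
  have hG_coe : ∀ x : ℝ, x ∈ Set.Ico (-(B / 2)) (B / 2) → G (x : AddCircle B) = g x := by
    intro x hx
    have hx' : x ∈ Set.Ico (-(B / 2)) (-(B / 2) + B) := ⟨hx.1, by linarith [hx.2]⟩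
    rw [hG_def]
    exact AddCircle.liftIco_coe_apply (f := g) hx'
  -- the 0th Fourier coefficient of G is -1
  have hG0 : fourierCoeff (⇑G) 0 = -1 := by
    rw [fourierCoeff_eq_intervalIntegral (⇑G) 0 (-(B / 2))]
    have hcongr : (∫ x in (-(B / 2))..(-(B / 2) + B), fourier (-0) (x : AddCircle B) • G (x : AddCircle B))
        = ∫ x in (-(B / 2))..(-(B / 2) + B), g x := by
      simp only [neg_zero, fourier_zero, one_smul]
      rw [intervalIntegral.integral_of_le (by linarith), intervalIntegral.integral_of_le (by linarith)]
      rw [integral_Ioc_eq_integral_Ioo, integral_Ioc_eq_integral_Ioo]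
      refine setIntegral_congr_fun measurableSet_Ioo fun x hx => ?_
      rw [hG_def]
      exact AddCircle.liftIco_coe_apply (f := g) (Set.Ioo_subset_Ico_self hx)
    rw [hcongr]
    have hq_int : (∫ x in (-(B / 2))..(-(B / 2) + B), q x) = c := by
      have i1 : (∫ x in (-(B / 2))..a, q x) = 0 := by
        rw [intervalIntegral.integral_congr (g := fun _ => (0 : ℝ)) ?_]
        · simp
        · intro x hx
          rw [Set.uIcc_of_le haB] at hx
          exact hq_zero x (fun h => absurd h.1 (not_lt.mpr hx.2))
      have i3 : (∫ x in b..(-(B / 2) + B), q x) = 0 := by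
        rw [intervalIntegral.integral_congr (g := fun _ => (0 : ℝ)) ?_]
        · simp
        · intro x hx
          rw [Set.uIcc_of_le (by linarith)] at hx
          exact hq_zero x (fun h => absurd h.2 (not_lt.mpr hx.1))
      rw [← intervalIntegral.integral_add_adjacent_intervals
            (hq_cont.intervalIntegrable (-(B / 2)) b) (hq_cont.intervalIntegrable b (-(B / 2) + B)),
          ← intervalIntegral.integral_add_adjacent_intervals
            (hq_cont.intervalIntegrable (-(B / 2)) a) (hq_cont.intervalIntegrable a b),
          i1, i3, ← hc_def]
      ring
    have hgint : (∫ x in (-(B / 2))..(-(B / 2) + B), g x) = -(B : ℂ) := by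
      rw [hg_def]
      simp only []
      rw [intervalIntegral.integral_const_mul, intervalIntegral.integral_ofReal, hq_int]
      rw [div_mul_cancel₀]
      exact_mod_cast hc_pos.ne'
    rw [hgint, Complex.real_smul]
    have hBne : (B : ℂ) ≠ 0 := by exact_mod_cast hB.ne'
    push_cast
    field_simp
  -- choose the approximation accuracy
  set ε : ℝ := (B / 2) * Real.sqrt (δ * B) with hε_def
  have hsq_pos : 0 < Real.sqrt (δ * B) := Real.sqrt_pos.mpr (by positivity)
  have hε_pos : 0 < ε := by rw [hε_def]; positivity
  -- density of trigonometric polynomials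
  have hGtc : G ∈ (Submodule.span ℂ (Set.range (fourier (T := B)))).topologicalClosure := by
    rw [span_fourier_closure_eq_top]
    exact Submodule.mem_top
  have hGcl : G ∈ closure ((Submodule.span ℂ (Set.range (fourier (T := B)))) :
      Set C(AddCircle B, ℂ)) := hGtc
  obtain ⟨p, hpmem, hpd⟩ := Metric.mem_closure_iff.mp hGcl ε hε_pos
  obtain ⟨cf, hcf⟩ := (Finsupp.mem_span_range_iff_exists_finsupp).mp hpmem
  -- the filter taps
  set N : ℕ := cf.support.sup fun n => n.natAbs with hN_def
  have hsupp : ∀ n : ℤ, n ∈ cf.support → n ∈ Finset.Icc (-(N : ℤ)) (N : ℤ) := by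
    intro n hn
    have h : n.natAbs ≤ N := by
      simpa using Finset.le_sup (f := fun n : ℤ => n.natAbs) hn
    rw [Finset.mem_Icc]
    omega
  set htap : ℤ → ℂ := fun n => if n = 0 then -1 else cf n with htap_def
  have h0mem : (0 : ℤ) ∈ Finset.Icc (-(N : ℤ)) (N : ℤ) := by
    rw [Finset.mem_Icc]; omega
  -- evaluate p at real points
  have hp_apply : ∀ y : AddCircle B, p y = ∑ i ∈ cf.support, cf i * fourier i y := by
    intro y
    rw [← hcf]
    rw [Finsupp.sum]
    rw [ContinuousMap.coe_sum, Finset.sum_apply]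
    simp [smul_eq_mul]
  -- the trigonometric sum equals p plus a constant
  have hsum_eq : ∀ x : ℝ,
      (∑ n ∈ Finset.Icc (-(N : ℤ)) (N : ℤ),
        htap n * Complex.exp (2 * Real.pi * Complex.I * (n : ℂ) * (x : ℂ) / (B : ℂ)))
      = p (x : AddCircle B) + (-1 - cf 0) := by
    intro x
    have e1 : ∀ n : ℤ, Complex.exp (2 * Real.pi * Complex.I * (n : ℂ) * (x : ℂ) / (B : ℂ))
        = fourier n (x : AddCircle B) := fun n => (fourier_coe_apply).symm
    calc (∑ n ∈ Finset.Icc (-(N : ℤ)) (N : ℤ),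
            htap n * Complex.exp (2 * Real.pi * Complex.I * (n : ℂ) * (x : ℂ) / (B : ℂ)))
        = ∑ n ∈ Finset.Icc (-(N : ℤ)) (N : ℤ),
            (cf n * fourier n (x : AddCircle B) +
              (if n = 0 then (-1 - cf 0) * fourier n (x : AddCircle B) else 0)) := by
          refine Finset.sum_congr rfl fun n _ => ?_
          rw [e1 n, htap_def]
          by_cases h : n = 0
          · subst h; simp
          · simp [h]
      _ = (∑ n ∈ Finset.Icc (-(N : ℤ)) (N : ℤ), cf n * fourier n (x : AddCircle B))
            + (-1 - cf 0) * fourier 0 (x : AddCircle B) := by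
          rw [Finset.sum_add_distrib, Finset.sum_ite_eq' _ (0 : ℤ)
            (fun n => (-1 - cf 0) * fourier n (x : AddCircle B)), if_pos h0mem]
      _ = p (x : AddCircle B) + (-1 - cf 0) := by
          rw [hp_apply]
          rw [← Finset.sum_subset hsupp
            (fun n _ hn => by rw [Finsupp.notMem_support_iff.mp hn, zero_mul])]
          rw [fourier_zero, mul_one]
  -- bound on the normalization error
  have hcf0 : ‖(-1 : ℂ) - cf 0‖ ≤ ε := by
    have h1 : fourierCoeff (⇑p) 0 = cf 0 := by
      have hco : ⇑p = fun t => ∑ i ∈ cf.support, cf i * fourier i t := by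
        funext t; exact hp_apply t
      rw [hco, my_fourierCoeff_zero]
      have hint : ∀ i ∈ cf.support,
          Integrable (fun t : AddCircle B => cf i * fourier i t) AddCircle.haarAddCircle :=
        fun i _ => (my_integrable (T := B) (fourier i)).const_mul (cf i)
      rw [integral_finset_sum _ hint]
      have : ∀ i ∈ cf.support,
          (∫ t : AddCircle B, cf i * fourier i t ∂AddCircle.haarAddCircle) = cf i * if i = 0 then 1 else 0 := by
        intro i _
        rw [integral_const_mul, my_integral_fourier (T := B)]
      rw [Finset.sum_congr rfl this]
      simp only [mul_ite, mul_one, mul_zero]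
      rw [Finset.sum_ite_eq' cf.support (0 : ℤ) (fun i => cf i)]
      by_cases h0 : (0 : ℤ) ∈ cf.support
      · rw [if_pos h0]
      · rw [if_neg h0, Finsupp.notMem_support_iff.mp h0]
    have h2 : (-1 : ℂ) - cf 0 = fourierCoeff (⇑G - ⇑p) 0 := by
      rw [my_fourierCoeff_sub G p, hG0, h1]
    rw [h2, ← ContinuousMap.coe_sub]
    calc ‖fourierCoeff (⇑(G - p)) 0‖ ≤ ‖G - p‖ := my_norm_fourierCoeff_le _
      _ = dist G p := (dist_eq_norm _ _).symm
      _ ≤ ε := hpd.le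
  -- pointwise bound off the interval (a,b)
  have hSbound : ∀ x : ℝ, x ∈ Set.Ico (-(B / 2)) (B / 2) → x ∉ Set.Ioo a b →
      ‖(∑ n ∈ Finset.Icc (-(N : ℤ)) (N : ℤ),
        htap n * Complex.exp (2 * Real.pi * Complex.I * (n : ℂ) * (x : ℂ) / (B : ℂ)))‖ ≤ 2 * ε := by
    intro x hx hxab
    rw [hsum_eq x]
    have hGx : G (x : AddCircle B) = 0 := by rw [hG_coe x hx]; exact hg_zero x hxab
    have hb1 : ‖p (x : AddCircle B) + (-1 - cf 0)‖
        ≤ ‖p (x : AddCircle B)‖ + ‖(-1 : ℂ) - cf 0‖ := norm_add_le _ _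
    have hb2 : ‖p (x : AddCircle B)‖ = ‖p (x : AddCircle B) - G (x : AddCircle B)‖ := by
      rw [hGx, sub_zero]
    have hb3 : ‖p (x : AddCircle B) - G (x : AddCircle B)‖ ≤ dist p G := by
      rw [← dist_eq_norm]
      exact ContinuousMap.dist_apply_le_dist _
    have hb4 : dist p G = dist G p := dist_comm _ _
    linarith [hcf0, hpd]
  -- finish
  refine ⟨N, N, htap, ?_, by simp [htap_def], ?_⟩
  · intro k hk
    have hk0 : k ≠ 0 := fun h => hk (h ▸ h0mem)
    rw [htap_def]
    simp only [if_neg hk0]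
    by_contra h
    exact hk (hsupp k (Finsupp.mem_support_iff.mpr h))
  · have hle : -(B / 2) ≤ B / 2 := by linarith
    rw [intervalIntegral.integral_of_le hle, intervalIntegral.integral_of_le hle]
    set Iρ := ∫ x in Set.Ioc (-(B / 2)) (B / 2), ‖ρ x‖ ^ 2 with hIρ_def
    have hIρ_nonneg : 0 ≤ Iρ := integral_nonneg fun x => by positivity
    -- a.e. facts
    have hrho0 : ∀ᵐ x ∂(volume : Measure ℝ), x ∈ Set.Ioo a b → ρ x = 0 := by
      have h1 : ∀ᵐ x ∂(volume.restrict (Set.Ioo a b)), ρ x = 0 :=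
        hE_zero.filter_mono (MeasureTheory.ae_mono (Measure.restrict_mono hI le_rfl))
      exact (ae_restrict_iff' measurableSet_Ioo).mp h1
    have hne : ∀ᵐ x ∂(volume : Measure ℝ), x ≠ B / 2 := by
      refine ae_iff.mpr ?_
      have hs : {x : ℝ | ¬ x ≠ B / 2} = {B / 2} := by ext y; simp
      rw [hs]
      exact Real.volume_singleton
    have hbd : ∀ᵐ x ∂(volume.restrict (Set.Ioc (-(B / 2)) (B / 2))),
        ‖ρ x * ((1 / (B : ℂ)) *
          ∑ n ∈ Finset.Icc (-(N : ℤ)) (N : ℤ),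
            htap n * Complex.exp (2 * Real.pi * Complex.I * (n : ℂ) * (x : ℂ) / (B : ℂ)))‖ ^ 2
        ≤ (Real.sqrt (δ * B)) ^ 2 * ‖ρ x‖ ^ 2 := by
      filter_upwards [ae_restrict_of_ae hrho0, ae_restrict_of_ae hne,
        ae_restrict_mem measurableSet_Ioc] with x hx0 hxne hxmem
      by_cases hxab : x ∈ Set.Ioo a b
      · rw [hx0 hxab, zero_mul, norm_zero]
        simpa using mul_nonneg (sq_nonneg (Real.sqrt (δ * B))) (sq_nonneg ‖ρ x‖)
      · have hxIco : x ∈ Set.Ico (-(B / 2)) (B / 2) :=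
          ⟨hxmem.1.le, lt_of_le_of_ne hxmem.2 hxne⟩
        have hS := hSbound x hxIco hxab
        rw [norm_mul, norm_mul]
        have h1B : ‖(1 / (B : ℂ))‖ = 1 / B := by
          rw [norm_div, norm_one, Complex.norm_real, Real.norm_eq_abs, abs_of_pos hB]
        rw [h1B]
        have h2 : (1 / B) * ‖(∑ n ∈ Finset.Icc (-(N : ℤ)) (N : ℤ),
            htap n * Complex.exp (2 * Real.pi * Complex.I * (n : ℂ) * (x : ℂ) / (B : ℂ)))‖
            ≤ Real.sqrt (δ * B) := by
          have h3 := mul_le_mul_of_nonneg_left hS (by positivity : (0 : ℝ) ≤ 1 / B)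
          have h4 : (1 / B) * (2 * ε) = Real.sqrt (δ * B) := by
            rw [hε_def]
            have he : (1 / B) * (2 * ((B / 2) * Real.sqrt (δ * B)))
                = (B * (1 / B)) * Real.sqrt (δ * B) := by ring
            rw [he, mul_one_div_cancel (ne_of_gt hB), one_mul]
          calc (1 / B) * ‖(∑ n ∈ Finset.Icc (-(N : ℤ)) (N : ℤ),
              htap n * Complex.exp (2 * Real.pi * Complex.I * (n : ℂ) * (x : ℂ) / (B : ℂ)))‖
              ≤ (1 / B) * (2 * ε) := h3
            _ = Real.sqrt (δ * B) := h4
        have h5 : ‖ρ x‖ * ((1 / B) * ‖(∑ n ∈ Finset.Icc (-(N : ℤ)) (N : ℤ),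
            htap n * Complex.exp (2 * Real.pi * Complex.I * (n : ℂ) * (x : ℂ) / (B : ℂ)))‖)
            ≤ ‖ρ x‖ * Real.sqrt (δ * B) := mul_le_mul_of_nonneg_left h2 (norm_nonneg _)
        calc (‖ρ x‖ * ((1 / B) * ‖(∑ n ∈ Finset.Icc (-(N : ℤ)) (N : ℤ),
              htap n * Complex.exp (2 * Real.pi * Complex.I * (n : ℂ) * (x : ℂ) / (B : ℂ)))‖)) ^ 2
            ≤ (‖ρ x‖ * Real.sqrt (δ * B)) ^ 2 := by
              apply pow_le_pow_left₀ (by positivity) h5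
          _ = (Real.sqrt (δ * B)) ^ 2 * ‖ρ x‖ ^ 2 := by ring
    have hint : (∫ x in Set.Ioc (-(B / 2)) (B / 2),
        ‖ρ x * ((1 / (B : ℂ)) *
          ∑ n ∈ Finset.Icc (-(N : ℤ)) (N : ℤ),
            htap n * Complex.exp (2 * Real.pi * Complex.I * (n : ℂ) * (x : ℂ) / (B : ℂ)))‖ ^ 2)
        ≤ ∫ x in Set.Ioc (-(B / 2)) (B / 2), (Real.sqrt (δ * B)) ^ 2 * ‖ρ x‖ ^ 2 := by
      refine integral_mono_of_nonneg (Filter.Eventually.of_forall fun x => by positivity)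
        ?_ hbd
      exact (hρ_L2.mono_set Set.Ioc_subset_Icc_self).const_mul _
    have hconst : (∫ x in Set.Ioc (-(B / 2)) (B / 2), (Real.sqrt (δ * B)) ^ 2 * ‖ρ x‖ ^ 2)
        = (Real.sqrt (δ * B)) ^ 2 * Iρ := by
      rw [hIρ_def, integral_const_mul]
    have hsq : (Real.sqrt (δ * B)) ^ 2 = δ * B := Real.sq_sqrt (by positivity)
    have hfin := mul_le_mul_of_nonneg_left (hint.trans hconst.le)
      (by positivity : (0 : ℝ) ≤ 1 / B)
    calc (1 / B) * (∫ x in Set.Ioc (-(B / 2)) (B / 2),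
          ‖ρ x * ((1 / (B : ℂ)) *
            ∑ n ∈ Finset.Icc (-(N : ℤ)) (N : ℤ),
              htap n * Complex.exp (2 * Real.pi * Complex.I * (n : ℂ) * (x : ℂ) / (B : ℂ)))‖ ^ 2)
        ≤ (1 / B) * ((Real.sqrt (δ * B)) ^ 2 * Iρ) := hfin
      _ = δ * Iρ := by
          rw [hsq]
          have he : (1 / B) * ((δ * B) * Iρ) = (B * (1 / B)) * (δ * Iρ) := by ring
          rw [he, mul_one_div_cancel (ne_of_gt hB), one_mul]
end
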